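/- Let e and f be regular expressions over α. If for every finite type X and every map h : α → (X → X → Prop) the relational interpretations of e and f coincide (ĥ_rel e = ĥ_rel f), then matches' e = matches' f. -/

import Mathlib

/-!
The interpretation of `e` relates `x` to `y` exactly when some word of `e.matches'` labels a
path from `x` to `y`. To separate two languages at a word `w`, take the finite automaton whose
states are the suffixes of `w` and whose `a`-transitions strip a leading `a`: the only word
labelling a path from `w` to `[]` is `w` itself.
-/

/-- Relational interpretation of regular expressions. -/
def rinterp {α X : Type*} (h : α → X → X → Prop) :
    RegularExpression α → X → X → Prop
  | .zero => fun _ _ => False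
  | .epsilon => fun x y => x = y
  | .char a => h a
  | .plus e f => fun x y => rinterp h e x y ∨ rinterp h f x y
  | .comp e f => fun x z => ∃ y, rinterp h e x y ∧ rinterp h f y z
  | .star e => Relation.ReflTransGen (rinterp h e)

open scoped Computability

namespace RegularExpression

variable {α X : Type*} (h : α → X → X → Prop)

def wordRel : List α → X → X → Prop
  | [] => fun x y => x = y
  | a :: u => fun x z => ∃ y, h a x y ∧ wordRel u y z

def langRel (L : Language α) (x y : X) : Prop :=
  ∃ u ∈ L, wordRel h u x y

variable {h}

theorem wordRel_append (u v : List α) (x z : X) :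
    wordRel h (u ++ v) x z ↔ ∃ y, wordRel h u x y ∧ wordRel h v y z := by
  induction u generalizing x with
  | nil => simp [wordRel]
  | cons a u ih =>
    simp only [List.cons_append, wordRel, ih]
    constructor
    · rintro ⟨y, hy, m, hm, hv⟩; exact ⟨m, ⟨y, hy, hm⟩, hv⟩
    · rintro ⟨m, ⟨y, hy, hm⟩, hv⟩; exact ⟨y, hy, m, hm, hv⟩

theorem langRel_mono {L M : Language α} (hLM : L ≤ M) {x y : X} :
    langRel h L x y → langRel h M x y :=
  fun ⟨u, hu, hp⟩ => ⟨u, hLM hu, hp⟩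

theorem langRel_one (x y : X) : langRel h 1 x y ↔ x = y := by
  simp [langRel, Language.mem_one, wordRel]

theorem langRel_add (L M : Language α) (x y : X) :
    langRel h (L + M) x y ↔ langRel h L x y ∨ langRel h M x y := by
  simp only [langRel, Language.mem_add, or_and_right, exists_or]

theorem langRel_mul (L M : Language α) (x z : X) :
    langRel h (L * M) x z ↔ ∃ y, langRel h L x y ∧ langRel h M y z := by
  constructor
  · rintro ⟨_, ⟨u, hu, v, hv, rfl⟩, huv⟩
    obtain ⟨y, hpu, hpv⟩ := (wordRel_append u v x z).1 huv
    exact ⟨y, ⟨u, hu, hpu⟩, ⟨v, hv, hpv⟩⟩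
  · rintro ⟨y, ⟨u, hu, hpu⟩, ⟨v, hv, hpv⟩⟩
    exact ⟨u ++ v, ⟨u, hu, v, hv, rfl⟩, (wordRel_append u v x z).2 ⟨y, hpu, hpv⟩⟩

theorem reflTransGen_of_langRel_pow (L : Language α) (n : ℕ) {x y : X}
    (hxy : langRel h (L ^ n) x y) : Relation.ReflTransGen (langRel h L) x y := by
  induction n generalizing x with
  | zero => rw [pow_zero, langRel_one] at hxy; exact hxy ▸ .refl
  | succ n ih =>
    obtain ⟨m, hxm, hmy⟩ := (langRel_mul _ _ _ _).1 (pow_succ' L n ▸ hxy)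
    exact .head hxm (ih hmy)

theorem langRel_kstar (L : Language α) (x y : X) :
    langRel h L∗ x y ↔ Relation.ReflTransGen (langRel h L) x y := by
  constructor
  · rintro ⟨u, hu, hp⟩
    rw [Language.kstar_eq_iSup_pow, Language.mem_iSup] at hu
    obtain ⟨n, hn⟩ := hu
    exact reflTransGen_of_langRel_pow L n ⟨u, hn, hp⟩
  · intro hxy
    induction hxy using Relation.ReflTransGen.head_induction_on with
    | refl => exact ⟨[], Language.nil_mem_kstar L, rfl⟩
    | head hxm _ hmy =>
      refine langRel_mono ?_ ((langRel_mul L L∗ _ _).2 ⟨_, hxm, hmy⟩)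
      exact (Language.one_add_self_mul_kstar_eq_kstar L).le.trans' le_add_self

theorem rinterp_eq_langRel (e : RegularExpression α) : rinterp h e = langRel h e.matches' := by
  induction e with
  | zero => ext; simp [rinterp, langRel]
  | epsilon => ext; exact (langRel_one _ _).symm
  | char a =>
    ext x y
    change h a x y ↔ ∃ u, u = [a] ∧ wordRel h u x y
    simp [wordRel]
  | plus e f ihe ihf => ext; simp only [rinterp, ihe, ihf, plus_def, matches'_add, langRel_add]
  | comp e f ihe ihf => ext; simp only [rinterp, ihe, ihf, comp_def, matches'_mul, langRel_mul]
  | star e ihe => ext; simp only [rinterp, ihe, matches'_star, langRel_kstar]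

end RegularExpression

section SuffixAutomaton

universe u

open RegularExpression

variable {α X : Type*}

def stripRel (s : X → List α) (a : α) (x y : X) : Prop :=
  s x = a :: s y

theorem wordRel_stripRel_iff {s : X → List α} (hs_inj : s.Injective)
    (hs_tail : ∀ x a t, s x = a :: t → ∃ y, s y = t) (u : List α) (x y : X) :
    wordRel (stripRel s) u x y ↔ s x = u ++ s y := by
  induction u generalizing x with
  | nil => exact hs_inj.eq_iff.symm
  | cons a u ih =>
    simp only [wordRel, stripRel, ih, List.cons_append]
    constructor
    · rintro ⟨m, hxm, hmy⟩; rw [hxm, hmy]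
    · intro hx
      obtain ⟨m, hm⟩ := hs_tail x a _ hx
      exact ⟨m, hm ▸ hx, hm⟩

theorem List.drop_fin_injective (w : List α) :
    Function.Injective fun i : Fin (w.length + 1) => w.drop i := by
  intro i j hij
  have := congrArg List.length hij
  simp only [List.length_drop] at this
  omega

theorem List.exists_drop_eq_of_drop_eq_cons {w t : List α} {i : ℕ} {a : α}
    (h : w.drop i = a :: t) : ∃ j : Fin (w.length + 1), w.drop j = t := by
  have hi : i < w.length := by
    by_contra! hi
    rw [List.drop_eq_nil_of_le hi] at h
    exact List.cons_ne_nil _ _ h.symm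
  refine ⟨⟨i + 1, by omega⟩, ?_⟩
  rw [← List.drop_drop, h]
  rfl

/-- State `i` stands for the suffix `w.drop i`. The states are indices rather than the suffixes
themselves so that they can be lifted to any universe, not only to those above `α`'s. -/
def suffixAutomaton (w : List α) : α → ULift (Fin (w.length + 1)) → ULift (Fin (w.length + 1)) →
    Prop :=
  stripRel fun i => w.drop i.down

theorem mem_matches'_iff_rinterp_suffixAutomaton (w : List α) (e : RegularExpression α) :
    w ∈ e.matches' ↔ rinterp (suffixAutomaton.{_, u} w) e ⟨0⟩ ⟨Fin.last _⟩ := by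
  have htail : ∀ (i : ULift.{u} (Fin (w.length + 1))) a t, w.drop i.down = a :: t →
      ∃ j : ULift.{u} (Fin (w.length + 1)), w.drop j.down = t := fun _ _ _ h =>
    let ⟨j, hj⟩ := List.exists_drop_eq_of_drop_eq_cons h
    ⟨⟨j⟩, hj⟩
  have hinj : Function.Injective fun i : ULift.{u} (Fin (w.length + 1)) => w.drop i.down :=
    (List.drop_fin_injective w).comp ULift.down_injective
  simp only [rinterp_eq_langRel, langRel, suffixAutomaton, wordRel_stripRel_iff hinj htail]
  simp

end SuffixAutomaton

/-- If the relational interpretations of `e` and `f` agree over every finite type, then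
`e` and `f` are language equivalent. -/
theorem finite_relational_to_language {α : Type*} (e f : RegularExpression α)
    (hrel : ∀ (X : Type*) [Finite X] (h : α → X → X → Prop), rinterp h e = rinterp h f) :
    e.matches' = f.matches' := by
  ext w
  rw [mem_matches'_iff_rinterp_suffixAutomaton, mem_matches'_iff_rinterp_suffixAutomaton, hrel]
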